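/- arXiv:2410.02348 — 4 statements merged into one kernel-verified Lean document; each statement's English description precedes it below -/
import Mathlib

section
/- (Gradient upper bound for the linearized network.) In the same setting, ‖∇L(θ)‖^2 ≤ (Σ_{i∈I} (a_i^2 + ‖w_i‖^2)) · λ_max(Σ_n) · ‖β̂ - β_n‖_{Σ_n}^2, where λ_max denotes the largest eigenvalue of Σ_n. -/
/-!
Expanding in an orthonormal eigenbasis of the symmetric matrix `Σ_n`, with eigenvalues `λ_j ≥ 0`
and coordinates `c_j` of `v = β̂ - β_n`, gives `‖Σ_n v‖² = ∑ λ_j² c_j² ≤ λ_max ∑ λ_j c_j²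
= λ_max ‖v‖²_{Σ_n}`. Cauchy–Schwarz bounds each `(w_i ⬝ Σ_n v)²` by `‖w_i‖² ‖Σ_n v‖²`, so the
squared gradient is at most `∑ (a_i² + ‖w_i‖²) · ‖Σ_n v‖²`.
-/

open Matrix

lemma dotProduct_sq_le_dotProduct_self_mul {m R : Type*} [Fintype m] [CommRing R] [LinearOrder R]
    [IsStrictOrderedRing R] (u v : m → R) : (u ⬝ᵥ v) ^ 2 ≤ (u ⬝ᵥ u) * (v ⬝ᵥ v) := by
  simpa only [dotProduct, sq] using Finset.sum_mul_sq_le_sq_mul_sq Finset.univ u v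

lemma sum_sq_dotProduct_add_sum_sq_mul_le {I m : Type*} [Fintype I] [Fintype m]
    (a : I → ℝ) (w : I → m → ℝ) (D : m → ℝ) :
    (∑ i, (w i ⬝ᵥ D) ^ 2) + ∑ i, a i ^ 2 * (D ⬝ᵥ D) ≤
      (∑ i, (a i ^ 2 + w i ⬝ᵥ w i)) * (D ⬝ᵥ D) :=
  calc (∑ i, (w i ⬝ᵥ D) ^ 2) + ∑ i, a i ^ 2 * (D ⬝ᵥ D)
      ≤ (∑ i, (w i ⬝ᵥ w i) * (D ⬝ᵥ D)) + ∑ i, a i ^ 2 * (D ⬝ᵥ D) := by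
        gcongr with i
        exact dotProduct_sq_le_dotProduct_self_mul _ _
    _ = (∑ i, (a i ^ 2 + w i ⬝ᵥ w i)) * (D ⬝ᵥ D) := by
        rw [← Finset.sum_add_distrib, Finset.sum_mul]
        exact Finset.sum_congr rfl fun i _ => by ring

namespace Matrix

variable {m : Type*} [Fintype m] [DecidableEq m] {A : Matrix m m ℝ}

namespace IsHermitian

variable (hA : A.IsHermitian)

lemma dotProduct_eq_sum_eigenvectorBasis (x y : m → ℝ) :
    x ⬝ᵥ y = ∑ i, (x ⬝ᵥ hA.eigenvectorBasis i) * (hA.eigenvectorBasis i ⬝ᵥ y) := by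
  simpa [EuclideanSpace.inner_eq_star_dotProduct, dotProduct_comm] using
    (hA.eigenvectorBasis.sum_inner_mul_inner (WithLp.toLp 2 x) (WithLp.toLp 2 y)).symm

lemma eigenvectorBasis_dotProduct_mulVec (i : m) (v : m → ℝ) :
    hA.eigenvectorBasis i ⬝ᵥ (A *ᵥ v) = hA.eigenvalues i * (hA.eigenvectorBasis i ⬝ᵥ v) := by
  rw [dotProduct_mulVec, ← mulVec_transpose, ← conjTranspose_eq_transpose_of_trivial, hA.eq,
    mulVec_eigenvectorBasis, smul_dotProduct, smul_eq_mul]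

lemma dotProduct_mulVec_eq_sum (v : m → ℝ) :
    v ⬝ᵥ (A *ᵥ v) = ∑ i, hA.eigenvalues i * (hA.eigenvectorBasis i ⬝ᵥ v) ^ 2 := by
  rw [hA.dotProduct_eq_sum_eigenvectorBasis]
  refine Finset.sum_congr rfl fun i _ => ?_
  rw [hA.eigenvectorBasis_dotProduct_mulVec, dotProduct_comm]
  ring

lemma mulVec_dotProduct_mulVec_eq_sum (v : m → ℝ) :
    (A *ᵥ v) ⬝ᵥ (A *ᵥ v) = ∑ i, hA.eigenvalues i ^ 2 * (hA.eigenvectorBasis i ⬝ᵥ v) ^ 2 := by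
  rw [hA.dotProduct_eq_sum_eigenvectorBasis]
  refine Finset.sum_congr rfl fun i _ => ?_
  rw [dotProduct_comm _ (hA.eigenvectorBasis i), hA.eigenvectorBasis_dotProduct_mulVec]
  ring

end IsHermitian

lemma PosSemidef.mulVec_dotProduct_mulVec_le (hA : A.PosSemidef) (v : m → ℝ) :
    (A *ᵥ v) ⬝ᵥ (A *ᵥ v) ≤ (⨆ i, hA.isHermitian.eigenvalues i) * (v ⬝ᵥ (A *ᵥ v)) := by
  rw [hA.isHermitian.mulVec_dotProduct_mulVec_eq_sum, hA.isHermitian.dotProduct_mulVec_eq_sum,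
    Finset.mul_sum]
  refine Finset.sum_le_sum fun i _ => ?_
  have hnonneg : 0 ≤ hA.isHermitian.eigenvalues i := hA.eigenvalues_nonneg i
  have hle : hA.isHermitian.eigenvalues i ≤ ⨆ j, hA.isHermitian.eigenvalues j :=
    le_ciSup (Set.finite_range _).bddAbove i
  calc hA.isHermitian.eigenvalues i ^ 2 * (hA.isHermitian.eigenvectorBasis i ⬝ᵥ v) ^ 2
      = hA.isHermitian.eigenvalues i *
          (hA.isHermitian.eigenvalues i * (hA.isHermitian.eigenvectorBasis i ⬝ᵥ v) ^ 2) := by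
        ring
    _ ≤ _ := by gcongr

end Matrix

theorem gradient_upper_bound_linearized_general {d n : ℕ}
    {I : Type*} [Fintype I]
    (X : Matrix (Fin d) (Fin n) ℝ) (y : Fin n → ℝ)
    (hH : ((1 / (n : ℝ)) • (X * Xᵀ)).IsHermitian)
    (a : I → ℝ) (w : I → Fin d → ℝ) :
    let βn : Fin d → ℝ := (X * Xᵀ)⁻¹ *ᵥ (X *ᵥ y)
    let Sn : Matrix (Fin d) (Fin d) ℝ := (1 / (n : ℝ)) • (X * Xᵀ)
    let βhat : Fin d → ℝ := ∑ i, a i • w i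
    let Dv : Fin d → ℝ := Sn *ᵥ (βhat - βn)
    let gradsq : ℝ := (∑ i, (w i ⬝ᵥ Dv) ^ 2) + ∑ i, (a i) ^ 2 * (Dv ⬝ᵥ Dv)
    let lammax : ℝ := ⨆ i, hH.eigenvalues i
    gradsq ≤ (∑ i, ((a i) ^ 2 + w i ⬝ᵥ w i)) * lammax *
      ((βhat - βn) ⬝ᵥ (Sn *ᵥ (βhat - βn))) := by
  intro βn Sn βhat Dv gradsq lammax
  have hSn : Sn.PosSemidef := by
    refine PosSemidef.smul ?_ (by positivity)
    simpa only [conjTranspose_eq_transpose_of_trivial] using posSemidef_self_mul_conjTranspose X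
  have hweights : 0 ≤ ∑ i, ((a i) ^ 2 + w i ⬝ᵥ w i) :=
    Finset.sum_nonneg fun i _ => add_nonneg (sq_nonneg _) <| by
      simpa only [star_trivial] using dotProduct_star_self_nonneg (w i)
  calc gradsq ≤ (∑ i, ((a i) ^ 2 + w i ⬝ᵥ w i)) * (Dv ⬝ᵥ Dv) :=
        sum_sq_dotProduct_add_sum_sq_mul_le a w Dv
    _ ≤ (∑ i, ((a i) ^ 2 + w i ⬝ᵥ w i)) * (lammax * ((βhat - βn) ⬝ᵥ (Sn *ᵥ (βhat - βn)))) :=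
        mul_le_mul_of_nonneg_left (hSn.mulVec_dotProduct_mulVec_le _) hweights
    _ = _ := (mul_assoc _ _ _).symm

/-- Gradient upper bound for the linearized network:
`‖∇L(θ)‖² ≤ (∑ (a_i² + ‖w_i‖²)) λ_max(Σ_n) ‖β̂ - β_n‖²_{Σ_n}`. -/
theorem gradient_upper_bound_linearized {d n : ℕ} (hn : 0 < n) (hd : 0 < d)
    {I : Type*} [Fintype I]
    (X : Matrix (Fin d) (Fin n) ℝ) (y : Fin n → ℝ) [Invertible (X * Xᵀ)]
    (hH : ((1 / (n : ℝ)) • (X * Xᵀ)).IsHermitian)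
    (a : I → ℝ) (w : I → Fin d → ℝ) :
    let βn : Fin d → ℝ := (X * Xᵀ)⁻¹ *ᵥ (X *ᵥ y)
    let Sn : Matrix (Fin d) (Fin d) ℝ := (1 / (n : ℝ)) • (X * Xᵀ)
    let βhat : Fin d → ℝ := ∑ i, a i • w i
    let Dv : Fin d → ℝ := Sn *ᵥ (βhat - βn)
    let gradsq : ℝ := (∑ i, (w i ⬝ᵥ Dv) ^ 2) + ∑ i, (a i) ^ 2 * (Dv ⬝ᵥ Dv)
    let lammax : ℝ := ⨆ i, hH.eigenvalues i
    gradsq ≤ (∑ i, ((a i) ^ 2 + w i ⬝ᵥ w i)) * lammax *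
      ((βhat - βn) ⬝ᵥ (Sn *ᵥ (βhat - βn))) :=
  gradient_upper_bound_linearized_general X y hH a w
end

section
/- Let f : ℝ≥0 → ℝ be differentiable with f'(t) ≥ a^2 - f(t)^2 for all t, where a > 0, and suppose f(0) ∈ (-a, a). Then for all t ≥ 0, f(t) ≥ a·tanh(a(t + t_0)), where t_0 ∈ ℝ is defined by f(0) = a·tanh(a·t_0). -/
/-!
With `g(t) = a tanh(a (t + t₀))`, which solves `g' = a² - g²` and starts at `f 0`, the difference
`h = f - g` satisfies the linear differential inequality `h' ≥ g² - f² = -(f + g) h`.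
The integrating factor `exp (∫₀ᵗ (f + g))` turns this into monotonicity of `h · exp (∫₀ᵗ (f + g))`,
which vanishes at `0`, so `h ≥ 0`.
-/

open Real Set

theorem Real.hasDerivAt_tanh (x : ℝ) : HasDerivAt tanh (1 - tanh x ^ 2) x := by
  have h := (hasDerivAt_sinh x).div (hasDerivAt_cosh x) (cosh_pos x).ne'
  have htanh : sinh / cosh = tanh := funext fun y => (tanh_eq_sinh_div_cosh y).symm
  rw [htanh] at h
  refine h.congr_deriv ?_
  rw [tanh_eq_sinh_div_cosh]
  field_simp

theorem hasDerivAt_mul_tanh_mul_add (a t₀ t : ℝ) :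
    HasDerivAt (fun t => a * tanh (a * (t + t₀))) (a ^ 2 - (a * tanh (a * (t + t₀))) ^ 2) t := by
  have hlin : HasDerivAt (fun t => a * (t + t₀)) a t := by
    simpa using ((hasDerivAt_id t).add_const t₀).const_mul a
  refine (((hasDerivAt_tanh _).comp t hlin).const_mul a).congr_deriv ?_
  ring

theorem nonneg_of_neg_mul_le_deriv {h h' p : ℝ → ℝ} (hp : ContinuousOn p (Ici 0))
    (hh : ∀ t, 0 ≤ t → HasDerivAt h (h' t) t) (hineq : ∀ t, 0 ≤ t → -(p t * h t) ≤ h' t)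
    (h₀ : 0 ≤ h 0) {t : ℝ} (ht : 0 ≤ t) : 0 ≤ h t := by
  -- extend `p` continuously to all of `ℝ` so that its primitive is differentiable everywhere
  set q : ℝ → ℝ := fun x => p (max x 0)
  have hq : Continuous q := hp.comp_continuous (continuous_id.max continuous_const)
    fun x => le_max_right x 0
  have hqp : ∀ x, 0 ≤ x → q x = p x := fun x hx => by simp [q, max_eq_left hx]
  set w : ℝ → ℝ := fun x => h x * exp (∫ y in (0 : ℝ)..x, q y)
  set w' : ℝ → ℝ := fun x => (h' x + p x * h x) * exp (∫ y in (0 : ℝ)..x, q y)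
  have hw : ∀ x, 0 ≤ x → HasDerivAt w (w' x) x := by
    intro x hx
    refine ((hh x hx).mul (hq.integral_hasStrictDerivAt 0 x).hasDerivAt.exp).congr_deriv ?_
    rw [hqp x hx]
    ring
  have hmono : MonotoneOn w (Ici 0) := by
    refine monotoneOn_of_hasDerivWithinAt_nonneg (f' := w') (convex_Ici 0)
      (fun x hx => (hw x hx).continuousAt.continuousWithinAt) (fun x hx => ?_) fun x hx => ?_
    · rw [interior_Ici] at hx
      exact (hw x (le_of_lt hx)).hasDerivWithinAt
    · rw [interior_Ici] at hx
      have := hineq x (le_of_lt hx)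
      have := exp_pos (∫ y in (0 : ℝ)..x, q y)
      nlinarith
  have hwt : w 0 ≤ w t := hmono self_mem_Ici ht ht
  simp only [w, intervalIntegral.integral_same, exp_zero, mul_one] at hwt
  exact nonneg_of_mul_nonneg_left (h₀.trans hwt) (exp_pos _)

theorem riccati_subsolution_le_supersolution {f f' g g' : ℝ → ℝ} {c : ℝ}
    (hf : ∀ t, 0 ≤ t → HasDerivAt f (f' t) t) (hg : ∀ t, 0 ≤ t → HasDerivAt g (g' t) t)
    (hf' : ∀ t, 0 ≤ t → c - f t ^ 2 ≤ f' t) (hg' : ∀ t, 0 ≤ t → g' t ≤ c - g t ^ 2)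
    (h₀ : g 0 ≤ f 0) {t : ℝ} (ht : 0 ≤ t) : g t ≤ f t := by
  have hcont : ContinuousOn (f + g) (Ici 0) := fun x hx =>
    ((hf x hx).continuousAt.add (hg x hx).continuousAt).continuousWithinAt
  refine sub_nonneg.mp (nonneg_of_neg_mul_le_deriv hcont (fun x hx => (hf x hx).sub (hg x hx))
    (fun x hx => ?_) (sub_nonneg.mpr h₀) ht)
  have := hf' x hx
  have := hg' x hx
  simp only [Pi.add_apply, Pi.sub_apply]
  nlinarith

theorem riccati_comparison_general (f f' : ℝ → ℝ) (a t₀ : ℝ)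
    (hderiv : ∀ t, 0 ≤ t → HasDerivAt f (f' t) t)
    (hineq : ∀ t, 0 ≤ t → a ^ 2 - f t ^ 2 ≤ f' t)
    (ht₀ : f 0 = a * Real.tanh (a * t₀)) :
    ∀ t, 0 ≤ t → a * Real.tanh (a * (t + t₀)) ≤ f t := fun _ ht =>
  riccati_subsolution_le_supersolution hderiv (fun t _ => hasDerivAt_mul_tanh_mul_add a t₀ t)
    hineq (fun _ _ => le_rfl) (by rw [ht₀, zero_add]) ht

/-- Grönwall-type comparison with the Riccati equation `g' = a² - g²`:
if `f' ≥ a² - f²`, `f(0) ∈ (-a, a)` and `f(0) = a tanh(a t₀)`, then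
`f(t) ≥ a tanh(a (t + t₀))` for all `t ≥ 0`. -/
theorem riccati_comparison (f f' : ℝ → ℝ) (a t₀ : ℝ) (ha : 0 < a)
    (hderiv : ∀ t, 0 ≤ t → HasDerivAt f (f' t) t)
    (hineq : ∀ t, 0 ≤ t → a ^ 2 - f t ^ 2 ≤ f' t)
    (hinit : f 0 ∈ Set.Ioo (-a) a)
    (ht₀ : f 0 = a * Real.tanh (a * t₀)) :
    ∀ t, 0 ≤ t → a * Real.tanh (a * (t + t₀)) ≤ f t :=
  riccati_comparison_general f f' a t₀ hderiv hineq ht₀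
end

section
/- Let y = x^⊤β* + η with x symmetric and continuous w.r.t. Lebesgue measure, η centered independent of x, and Σ = E[x x^⊤], and assume Σβ* ≠ 0. Call D ∈ ℝ^d extremal if there exists w ∈ S^{d-1} with D = E[1_{w^⊤x>0} y x] and either D = 0 or D/‖D‖ ∈ {w, -w}. Then for every w ∈ S^{d-1}, E[1_{w^⊤x>0} y x] = (1/2)Σβ*, and this vector satisfies the extremality condition precisely for w = ±Σβ*/‖Σβ*‖, the condition D/‖D‖ ∈ {w, -w} failing for all other w; in particular the set of extremal vectors is exactly {(1/2)Σβ*}. -/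
open MeasureTheory

/-- For the linear model with symmetric continuous input law, `D(w) = (1/2) Σβ*` for every
unit vector `w`, and the extremality condition `D(w)/‖D(w)‖ ∈ {w, -w}` holds precisely for
`w = ± Σβ*/‖Σβ*‖`; hence `(1/2) Σβ*` is the unique nonzero extremal vector. -/
theorem extremal_vectors_linear_model {d : ℕ}
    {Ω : Type*} [MeasureSpace Ω] (P : Measure Ω := by volume_tac) [IsProbabilityMeasure P]
    (x : Ω → EuclideanSpace ℝ (Fin d)) (η : Ω → ℝ) (β : EuclideanSpace ℝ (Fin d))
    (hxmeas : AEMeasurable x P) (hηmeas : AEMeasurable η P)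
    (hsymm : Measure.map x P = Measure.map (fun ω => -x ω) P)
    (hcont : Measure.map x P ≪ (volume : Measure (EuclideanSpace ℝ (Fin d))))
    (hindep : ProbabilityTheory.IndepFun x η P)
    (hηcentered : ∫ ω, η ω ∂P = 0)
    (hx2 : Integrable (fun ω => ‖x ω‖ ^ 2) P)
    (hηx : Integrable (fun ω => |η ω| * ‖x ω‖) P)
    -- `Σβ* ≠ 0`
    (hSβ : (∫ ω, (inner ℝ (x ω) β : ℝ) • x ω ∂P) ≠ 0) :
    let Sβ : EuclideanSpace ℝ (Fin d) := ∫ ω, (inner ℝ (x ω) β : ℝ) • x ω ∂P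
    let D : EuclideanSpace ℝ (Fin d) → EuclideanSpace ℝ (Fin d) := fun w =>
      ∫ ω in {ω | 0 < (inner ℝ w (x ω) : ℝ)}, ((inner ℝ (x ω) β : ℝ) + η ω) • x ω ∂P
    (∀ w, ‖w‖ = 1 → D w = (1 / 2 : ℝ) • Sβ) ∧
      (∀ w : EuclideanSpace ℝ (Fin d), ‖w‖ = 1 →
        ((‖D w‖⁻¹ • D w = w ∨ ‖D w‖⁻¹ • D w = -w) ↔
          (w = ‖Sβ‖⁻¹ • Sβ ∨ w = -(‖Sβ‖⁻¹ • Sβ)))) := by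
  intro Sβ D
  have key : ∀ w : EuclideanSpace ℝ (Fin d), ‖w‖ = 1 → D w = (1 / 2 : ℝ) • Sβ := by
    intro w hw
    have hw0 : w ≠ 0 := fun h => by simp [h] at hw
    set f : EuclideanSpace ℝ (Fin d) → EuclideanSpace ℝ (Fin d) :=
      fun y => (inner ℝ y β : ℝ) • y with hf
    have hfc : Continuous f := (continuous_id.inner (𝕜 := ℝ) continuous_const).smul continuous_id
    set μ : Measure (EuclideanSpace ℝ (Fin d)) := Measure.map x P with hμ
    have hneg : Measure.map (fun y : EuclideanSpace ℝ (Fin d) => -y) μ = μ := by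
      rw [hμ, AEMeasurable.map_map_of_aemeasurable measurable_neg.aemeasurable hxmeas]
      exact hsymm.symm
    -- integrability facts
    have hfx : Integrable (fun ω => f (x ω)) P := by
      refine Integrable.mono' (hx2.const_mul ‖β‖) ?_ ?_
      · exact (hfc.measurable.comp_aemeasurable hxmeas).aestronglyMeasurable
      · refine Filter.Eventually.of_forall fun ω => ?_
        have h1 : ‖f (x ω)‖ = |(inner ℝ (x ω) β : ℝ)| * ‖x ω‖ := by
          simp [hf, norm_smul]
        have h2 : |(inner ℝ (x ω) β : ℝ)| ≤ ‖x ω‖ * ‖β‖ := abs_real_inner_le_norm _ _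
        have h3 : (0:ℝ) ≤ ‖x ω‖ := norm_nonneg _
        rw [h1]
        nlinarith [norm_nonneg (x ω)]
    have hfμ : Integrable f μ := by
      rw [hμ, integrable_map_measure hfc.aestronglyMeasurable hxmeas]
      exact hfx
    -- the half spaces
    set Splus : Set (EuclideanSpace ℝ (Fin d)) := {y | 0 < (inner ℝ w y : ℝ)} with hSplusdef
    set Sminus : Set (EuclideanSpace ℝ (Fin d)) := {y | (inner ℝ w y : ℝ) < 0} with hSminusdef
    have hSp : MeasurableSet Splus :=
      (isOpen_lt continuous_const (continuous_const.inner continuous_id)).measurableSet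
    have hSm : MeasurableSet Sminus :=
      (isOpen_lt (continuous_const.inner continuous_id) continuous_const).measurableSet
    have hnull : μ {y : EuclideanSpace ℝ (Fin d) | (inner ℝ w y : ℝ) = 0} = 0 := by
      refine hcont ?_
      have hset : {y : EuclideanSpace ℝ (Fin d) | (inner ℝ w y : ℝ) = 0}
          = ((ℝ ∙ w)ᗮ : Submodule ℝ (EuclideanSpace ℝ (Fin d))) := by
        ext y
        simp [Submodule.mem_orthogonal_singleton_iff_inner_right]
      rw [hset]
      refine Measure.addHaar_submodule _ _ ?_
      intro htop
      have hwmem : w ∈ (ℝ ∙ w)ᗮ := htop ▸ Submodule.mem_top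
      have : (inner ℝ w w : ℝ) = 0 :=
        Submodule.mem_orthogonal_singleton_iff_inner_right.mp hwmem
      rw [real_inner_self_eq_norm_sq, hw] at this
      norm_num at this
    -- flip: integral over Sminus equals integral over Splus
    have hflip : ∫ y in Sminus, f y ∂μ = ∫ y in Splus, f y ∂μ := by
      conv_lhs => rw [← hneg]
      rw [setIntegral_map hSm hfc.aestronglyMeasurable measurable_neg.aemeasurable]
      have hpre : (fun y : EuclideanSpace ℝ (Fin d) => -y) ⁻¹' Sminus = Splus := by
        ext y
        simp [hSminusdef, hSplusdef, inner_neg_right]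
      rw [hpre]
      refine setIntegral_congr_fun hSp fun y _ => ?_
      simp [hf, inner_neg_left, neg_smul, smul_neg]
    -- total integral splits
    have hdisj : Disjoint Splus Sminus := by
      rw [Set.disjoint_left]
      intro y h1 h2
      exact absurd (h1.trans h2) (lt_irrefl (0:ℝ))
    have haeuniv : ((Splus ∪ Sminus : Set (EuclideanSpace ℝ (Fin d)))) =ᵐ[μ] (Set.univ : Set (EuclideanSpace ℝ (Fin d))) := by
      rw [ae_eq_univ]
      have hcompl : (Splus ∪ Sminus)ᶜ = {y : EuclideanSpace ℝ (Fin d) | (inner ℝ w y : ℝ) = 0} := by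
        ext y
        simp only [Set.mem_compl_iff, Set.mem_union, hSplusdef, hSminusdef, Set.mem_setOf_eq,
          not_or, not_lt]
        constructor
        · rintro ⟨h1, h2⟩; linarith
        · intro h; constructor <;> simp [h]
      rw [hcompl]
      exact hnull
    have hunion : ∫ y, f y ∂μ = (∫ y in Splus, f y ∂μ) + ∫ y in Sminus, f y ∂μ := by
      calc ∫ y, f y ∂μ = ∫ y in Set.univ, f y ∂μ := by rw [setIntegral_univ]
        _ = ∫ y in Splus ∪ Sminus, f y ∂μ := (setIntegral_congr_set haeuniv).symm
        _ = _ := setIntegral_union hdisj hSm hfμ.integrableOn hfμ.integrableOn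
    have htotal : ∫ y, f y ∂μ = Sβ := by
      rw [hμ, integral_map hxmeas hfc.aestronglyMeasurable]
    have hIplus : ∫ y in Splus, f y ∂μ = (1 / 2 : ℝ) • Sβ := by
      have h2 : (∫ y in Splus, f y ∂μ) + (∫ y in Splus, f y ∂μ) = Sβ := by
        rw [← htotal, hunion, hflip]
      have h3 : (2:ℝ) • (∫ y in Splus, f y ∂μ) = Sβ := by rw [two_smul]; exact h2
      calc ∫ y in Splus, f y ∂μ = (1/2 : ℝ) • ((2:ℝ) • ∫ y in Splus, f y ∂μ) := by
            rw [smul_smul]; norm_num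
        _ = (1/2 : ℝ) • Sβ := by rw [h3]
    -- the noise part vanishes
    have hηint : Integrable (fun ω => η ω • x ω) P := by
      refine Integrable.mono' hηx ((hηmeas.smul hxmeas).aestronglyMeasurable) ?_
      refine Filter.Eventually.of_forall fun ω => ?_
      rw [norm_smul, Real.norm_eq_abs]
    have hηzero : ∫ ω in {ω | 0 < (inner ℝ w (x ω) : ℝ)}, η ω • x ω ∂P = 0 := by
      set I := ∫ ω in {ω | 0 < (inner ℝ w (x ω) : ℝ)}, η ω • x ω ∂P with hI
      have hinner : ∀ c : EuclideanSpace ℝ (Fin d), (inner ℝ c I : ℝ) = 0 := by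
        intro c
        obtain ⟨x', hx'meas, hxx'⟩ := hxmeas
        have hη'indep : ProbabilityTheory.IndepFun x' η P :=
          hindep.congr hxx' Filter.EventuallyEq.rfl
        set g : EuclideanSpace ℝ (Fin d) → ℝ := Splus.indicator (fun y => (inner ℝ c y : ℝ))
          with hgdef
        have hgmeas : Measurable g :=
          ((continuous_const.inner continuous_id)).measurable.indicator hSp
        have hA' : MeasurableSet (x' ⁻¹' Splus) := hx'meas hSp
        have hsetae : {ω | 0 < (inner ℝ w (x ω) : ℝ)} =ᵐ[P] (x' ⁻¹' Splus) := by
          filter_upwards [hxx'] with ω h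
          show (0 < (inner ℝ w (x ω) : ℝ)) = (x' ω ∈ Splus)
          rw [h]; rfl
        have step1 : (inner ℝ c I : ℝ)
            = ∫ ω in {ω | 0 < (inner ℝ w (x ω) : ℝ)}, (inner ℝ c (η ω • x ω) : ℝ) ∂P :=
          (integral_inner hηint.integrableOn c).symm
        rw [step1, setIntegral_congr_set hsetae]
        have step2 : ∫ ω in x' ⁻¹' Splus, (inner ℝ c (η ω • x ω) : ℝ) ∂P
            = ∫ ω in x' ⁻¹' Splus, (inner ℝ c (η ω • x' ω) : ℝ) ∂P := by
          refine integral_congr_ae (Filter.EventuallyEq.restrict ?_)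
          filter_upwards [hxx'] with ω h
          rw [h]
        rw [step2, ← integral_indicator hA']
        have step3 : (x' ⁻¹' Splus).indicator (fun ω => (inner ℝ c (η ω • x' ω) : ℝ))
            = fun ω => η ω * g (x' ω) := by
          funext ω
          by_cases h : x' ω ∈ Splus
          · have h' : ω ∈ x' ⁻¹' Splus := h
            rw [Set.indicator_of_mem h', hgdef, Set.indicator_of_mem h, real_inner_smul_right]
          · have h' : ω ∉ x' ⁻¹' Splus := h
            rw [Set.indicator_of_notMem h', hgdef, Set.indicator_of_notMem h, mul_zero]
        rw [step3]
        have hindep2 : ProbabilityTheory.IndepFun η (fun ω => g (x' ω)) P :=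
          hη'indep.symm.comp measurable_id hgmeas
        rw [hindep2.integral_fun_mul_eq_mul_integral hηmeas.aestronglyMeasurable
          ((hgmeas.comp hx'meas).aestronglyMeasurable)]
        rw [hηcentered, zero_mul]
      have hII := hinner I
      exact inner_self_eq_zero.mp hII
    -- assemble
    have hsplit : D w = (∫ ω in {ω | 0 < (inner ℝ w (x ω) : ℝ)}, f (x ω) ∂P)
        + ∫ ω in {ω | 0 < (inner ℝ w (x ω) : ℝ)}, η ω • x ω ∂P := by
      have : D w = ∫ ω in {ω | 0 < (inner ℝ w (x ω) : ℝ)},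
          ((inner ℝ (x ω) β : ℝ) • x ω + η ω • x ω) ∂P := by
        show (∫ ω in {ω | 0 < (inner ℝ w (x ω) : ℝ)}, ((inner ℝ (x ω) β : ℝ) + η ω) • x ω ∂P) = _
        congr 1
        funext ω
        rw [add_smul]
      rw [this]
      exact integral_add hfx.integrableOn hηint.integrableOn
    have htrans : ∫ y in Splus, f y ∂μ = ∫ ω in {ω | 0 < (inner ℝ w (x ω) : ℝ)}, f (x ω) ∂P := by
      rw [hμ, setIntegral_map hSp hfc.aestronglyMeasurable hxmeas]
      rfl
    rw [hsplit, hηzero, add_zero, ← htrans]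
    exact hIplus
  refine ⟨key, fun w hw => ?_⟩
  have hDw := key w hw
  have hSβ' : Sβ ≠ 0 := hSβ
  have hnorm : ‖Sβ‖ ≠ 0 := norm_ne_zero_iff.mpr hSβ'
  have hu : ‖D w‖⁻¹ • D w = ‖Sβ‖⁻¹ • Sβ := by
    rw [hDw, norm_smul, smul_smul, Real.norm_eq_abs]
    congr 1
    rw [abs_of_pos (by norm_num : (0:ℝ) < 1/2)]
    field_simp
  rw [hu]
  constructor
  · rintro (h | h)
    · exact Or.inl h.symm
    · exact Or.inr (by rw [h, neg_neg])
  · rintro (h | h)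
    · exact Or.inl h.symm
    · exact Or.inr (by rw [h, neg_neg])
end

section
/- In the setting of the previous decoupled dynamics, if additionally Σ_n is positive definite and Σ_{i∈I} a_i(t)^2 ≥ ε₂ > 0 for all t in an interval [t₀, t₁], then ‖β̂(t) - β_n‖_{Σ_n}^2 ≤ ‖β̂(t₀) - β_n‖_{Σ_n}^2 · e^{-2 ε₂ λ_min(Σ_n) (t - t₀)} for all t ∈ [t₀, t₁]. -/
/-!
Along the flow, `g(t) = (β̂ - βₙ) ⬝ Σₙ (β̂ - βₙ)` has derivative `-2 ⟨M y, y⟩` with `y = Σₙ (β̂ - βₙ)`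
and `M = (∑ aᵢ²) I + ∑ wᵢ wᵢᵀ ⪰ ε₂ I`. Diagonalising `Σₙ` gives `‖y‖² ≥ λ_min g`, so
`g' ≤ -2 ε₂ λ_min g`, and Grönwall's inequality integrates this to the exponential bound.
-/

open Matrix Set

theorem HasDerivAt.dotProduct {𝕜 ι : Type*} [NontriviallyNormedField 𝕜] [Fintype ι]
    {f g : 𝕜 → ι → 𝕜} {f' g' : ι → 𝕜} {x : 𝕜}
    (hf : HasDerivAt f f' x) (hg : HasDerivAt g g' x) :
    HasDerivAt (fun t => f t ⬝ᵥ g t) (f' ⬝ᵥ g x + f x ⬝ᵥ g') x := by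
  simp only [_root_.dotProduct, ← Finset.sum_add_distrib]
  exact HasDerivAt.fun_sum fun i _ => (hasDerivAt_pi.1 hf i).mul (hasDerivAt_pi.1 hg i)

theorem HasDerivAt.mulVec {𝕜 ι κ : Type*} [NontriviallyNormedField 𝕜] [Fintype κ]
    (A : Matrix ι κ 𝕜) {f : 𝕜 → κ → 𝕜} {f' : κ → 𝕜} {x : 𝕜}
    (hf : HasDerivAt f f' x) :
    HasDerivAt (fun t => A *ᵥ f t) (A *ᵥ f') x :=
  hasDerivAt_pi.2 fun _ => HasDerivAt.fun_sum fun j _ => (hasDerivAt_pi.1 hf j).const_mul _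

theorem HasDerivAt.dotProduct_mulVec_self {ι : Type*} [Fintype ι] {S : Matrix ι ι ℝ}
    (hS : S.IsSymm) {f : ℝ → ι → ℝ} {f' : ι → ℝ} {x : ℝ} (hf : HasDerivAt f f' x) :
    HasDerivAt (fun t => f t ⬝ᵥ (S *ᵥ f t)) (2 * (f' ⬝ᵥ (S *ᵥ f x))) x := by
  refine (hf.dotProduct (hf.mulVec S)).congr_deriv ?_
  rw [dotProduct_mulVec (f x), ← mulVec_transpose, hS.eq, dotProduct_comm (S *ᵥ f x)]
  ring

namespace Matrix

theorem posSemidef_sum_vecMulVec_self {n ι : Type*} [Finite n] [Fintype ι] (w : ι → n → ℝ) :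
    (∑ i, vecMulVec (w i) (w i)).PosSemidef :=
  posSemidef_sum _ fun i _ => by simpa using posSemidef_vecMulVec_self_star (w i)

variable {n : Type*} [Fintype n] [DecidableEq n] {A : Matrix n n ℝ}

theorem dotProduct_mulVec_mulVec_of_mem_unitaryGroup {U : Matrix n n ℝ}
    (hU : U ∈ unitaryGroup n ℝ) (v w : n → ℝ) : (U *ᵥ v) ⬝ᵥ (U *ᵥ w) = v ⬝ᵥ w := by
  rw [dotProduct_mulVec, ← mulVec_transpose, mulVec_mulVec, ← conjTranspose_eq_transpose_of_trivial,
    ← star_eq_conjTranspose, mem_unitaryGroup_iff'.mp hU, one_mulVec]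

theorem IsHermitian.mulVec_eq_eigenvectorUnitary_mulVec (hA : A.IsHermitian) (x : n → ℝ) :
    A *ᵥ x = (hA.eigenvectorUnitary : Matrix n n ℝ) *ᵥ
      (hA.eigenvalues * (star (hA.eigenvectorUnitary : Matrix n n ℝ) *ᵥ x)) := by
  conv_lhs => rw [hA.spectral_theorem]
  simp only [Unitary.conjStarAlgAut_apply, ← mulVec_mulVec]
  congr 1
  ext i
  exact mulVec_diagonal _ _ i

theorem PosSemidef.iInf_eigenvalues_mul_dotProduct_mulVec_le (hA : A.PosSemidef) (x : n → ℝ) :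
    (⨅ i, hA.1.eigenvalues i) * (x ⬝ᵥ (A *ᵥ x)) ≤ (A *ᵥ x) ⬝ᵥ (A *ᵥ x) := by
  set U : Matrix n n ℝ := ↑hA.1.eigenvectorUnitary
  have hU : U ∈ unitaryGroup n ℝ := hA.1.eigenvectorUnitary.2
  set lam := hA.1.eigenvalues
  have hx : x = U *ᵥ (star U *ᵥ x) := by
    rw [mulVec_mulVec, mem_unitaryGroup_iff.mp hU, one_mulVec]
  have hAx : A *ᵥ x = U *ᵥ (lam * (star U *ᵥ x)) := hA.1.mulVec_eq_eigenvectorUnitary_mulVec x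
  generalize star U *ᵥ x = z at hx hAx
  rw [hAx, dotProduct_mulVec_mulVec_of_mem_unitaryGroup hU]
  nth_rewrite 1 [hx]
  rw [dotProduct_mulVec_mulVec_of_mem_unitaryGroup hU]
  simp only [_root_.dotProduct, Pi.mul_apply, Finset.mul_sum]
  refine Finset.sum_le_sum fun i _ => ?_
  have hle : (⨅ j, lam j) ≤ lam i := ciInf_le (finite_range _).bddBelow i
  have hnonneg : 0 ≤ z i * (lam i * z i) := by
    nlinarith [hA.eigenvalues_nonneg i, mul_self_nonneg (z i)]
  calc (⨅ j, lam j) * (z i * (lam i * z i)) ≤ lam i * (z i * (lam i * z i)) :=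
        mul_le_mul_of_nonneg_right hle hnonneg
    _ = lam i * z i * (lam i * z i) := by ring

theorem PosSemidef.mul_dotProduct_self_le (hA : A.PosSemidef) (s : ℝ) (y : n → ℝ) :
    s * (y ⬝ᵥ y) ≤ ((s • 1 + A) *ᵥ y) ⬝ᵥ y := by
  have hAy : 0 ≤ (A *ᵥ y) ⬝ᵥ y := by
    simpa [dotProduct_comm] using hA.dotProduct_mulVec_nonneg y
  rw [add_mulVec, smul_mulVec, one_mulVec, add_dotProduct, smul_dotProduct, smul_eq_mul]
  linarith

theorem PosSemidef.mul_iInf_eigenvalues_mul_le {S B : Matrix n n ℝ} (hS : S.PosSemidef)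
    (hB : B.PosSemidef) {s ε : ℝ} (hs : 0 ≤ s) (hεs : ε ≤ s) (x : n → ℝ) :
    ε * (⨅ i, hS.1.eigenvalues i) * (x ⬝ᵥ (S *ᵥ x)) ≤ ((s • 1 + B) *ᵥ (S *ᵥ x)) ⬝ᵥ (S *ᵥ x) := by
  have hrayleigh := hS.iInf_eigenvalues_mul_dotProduct_mulVec_le x
  have hnonneg : 0 ≤ (⨅ i, hS.1.eigenvalues i) * (x ⬝ᵥ (S *ᵥ x)) :=
    mul_nonneg (Real.iInf_nonneg hS.eigenvalues_nonneg)
      (by simpa using hS.dotProduct_mulVec_nonneg x)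
  calc ε * (⨅ i, hS.1.eigenvalues i) * (x ⬝ᵥ (S *ᵥ x))
      ≤ s * ((⨅ i, hS.1.eigenvalues i) * (x ⬝ᵥ (S *ᵥ x))) := by
        rw [mul_assoc]; exact mul_le_mul_of_nonneg_right hεs hnonneg
    _ ≤ s * ((S *ᵥ x) ⬝ᵥ (S *ᵥ x)) := mul_le_mul_of_nonneg_left hrayleigh hs
    _ ≤ ((s • 1 + B) *ᵥ (S *ᵥ x)) ⬝ᵥ (S *ᵥ x) := hB.mul_dotProduct_self_le s _

end Matrix

theorem le_mul_exp_of_deriv_le_mul {f f' : ℝ → ℝ} {K a b : ℝ} (hf : ContinuousOn f (Icc a b))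
    (hf' : ∀ x ∈ Ico a b, HasDerivWithinAt f (f' x) (Ici x) x)
    (bound : ∀ x ∈ Ico a b, f' x ≤ K * f x) :
    ∀ x ∈ Icc a b, f x ≤ f a * Real.exp (K * (x - a)) := by
  intro x hx
  rw [← gronwallBound_ε0]
  exact le_gronwallBound_of_liminf_deriv_right_le hf
    (fun x hx _ hr => (hf' x hx).liminf_right_slope_le hr) le_rfl
    (fun x hx => by simpa using bound x hx) x hx

theorem decoupled_dynamics_exponential_decay_general {d : ℕ} {I : Type*} [Fintype I]
    (a : I → ℝ → ℝ) (w : I → ℝ → Fin d → ℝ)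
    (Sn : Matrix (Fin d) (Fin d) ℝ) (βn : Fin d → ℝ)
    (hpd : Sn.PosDef)
    (βhat : ℝ → Fin d → ℝ)
    (hODE : ∀ t, HasDerivAt βhat
      (-((((∑ i, a i t ^ 2) • (1 : Matrix (Fin d) (Fin d) ℝ)
          + ∑ i, vecMulVec (w i t) (w i t))) *ᵥ (Sn *ᵥ (βhat t - βn)))) t)
    (t₀ t₁ ε₂ : ℝ)
    (hgrow : ∀ t ∈ Set.Icc t₀ t₁, ε₂ ≤ ∑ i, a i t ^ 2) :
    let lammin : ℝ := ⨅ i, hpd.1.eigenvalues i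
    ∀ t ∈ Set.Icc t₀ t₁,
      (βhat t - βn) ⬝ᵥ (Sn *ᵥ (βhat t - βn)) ≤
        ((βhat t₀ - βn) ⬝ᵥ (Sn *ᵥ (βhat t₀ - βn)))
          * Real.exp (-2 * ε₂ * lammin * (t - t₀)) := by
  intro lammin
  have hderiv := fun t => ((hODE t).sub_const βn).dotProduct_mulVec_self
    (isHermitian_iff_isSymm.mp hpd.1)
  refine le_mul_exp_of_deriv_le_mul
    (fun t _ => (hderiv t).continuousAt.continuousWithinAt)
    (fun t _ => (hderiv t).hasDerivWithinAt) fun t ht => ?_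
  have hdecay := hpd.posSemidef.mul_iInf_eigenvalues_mul_le
    (posSemidef_sum_vecMulVec_self fun i => w i t)
    (Finset.sum_nonneg fun i _ => sq_nonneg (a i t)) (hgrow t (Ico_subset_Icc_self ht))
    (βhat t - βn)
  rw [neg_dotProduct]
  linarith

/-- Exponential decay under the decoupled dynamics: if `Σ_n` is positive definite and
`∑ a_i(t)² ≥ ε₂ > 0` on `[t₀, t₁]`, then
`‖β̂(t) - β_n‖²_{Σ_n} ≤ ‖β̂(t₀) - β_n‖²_{Σ_n} e^{-2 ε₂ λ_min(Σ_n)(t - t₀)}`. -/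
theorem decoupled_dynamics_exponential_decay {d : ℕ} {I : Type*} [Fintype I]
    (a : I → ℝ → ℝ) (w : I → ℝ → Fin d → ℝ)
    (Sn : Matrix (Fin d) (Fin d) ℝ) (βn : Fin d → ℝ)
    (hpd : Sn.PosDef)
    (βhat : ℝ → Fin d → ℝ)
    (hβhat : ∀ t, βhat t = ∑ i, a i t • w i t)
    (hODE : ∀ t, HasDerivAt βhat
      (-((((∑ i, a i t ^ 2) • (1 : Matrix (Fin d) (Fin d) ℝ)
          + ∑ i, vecMulVec (w i t) (w i t))) *ᵥ (Sn *ᵥ (βhat t - βn)))) t)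
    (t₀ t₁ ε₂ : ℝ) (hε₂ : 0 < ε₂)
    (hgrow : ∀ t ∈ Set.Icc t₀ t₁, ε₂ ≤ ∑ i, a i t ^ 2) :
    let lammin : ℝ := ⨅ i, hpd.1.eigenvalues i
    ∀ t ∈ Set.Icc t₀ t₁,
      (βhat t - βn) ⬝ᵥ (Sn *ᵥ (βhat t - βn)) ≤
        ((βhat t₀ - βn) ⬝ᵥ (Sn *ᵥ (βhat t₀ - βn)))
          * Real.exp (-2 * ε₂ * lammin * (t - t₀)) :=
  decoupled_dynamics_exponential_decay_general a w Sn βn hpd βhat hODE t₀ t₁ ε₂ hgrow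
end
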